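/- Let g, τ, γ be natural numbers with g̃ := g − γ − 2τ ≥ 1. Define, for 0 ≤ j ≤ i ≤ τ and 0 ≤ k ≤ γ, the theta-hyperplane counts t(i,j,k) by: t(i,j,k) = 2^(2g̃ + τ − j − 1) · C(τ,i) · C(i,j) · C(γ,k) whenever j < i; and t(i,i,k) = 2^(τ−i) · C(τ,i) · C(γ,k) · N_{g̃} if τ − i + γ − k is even, while t(i,i,k) = 2^(τ−i) · C(τ,i) · C(γ,k) · N⁺_{g̃} if τ − i + γ − k is odd. Then the total degree of the configuration of theta hyperplanes, counted with the multiplicities 4^(i−j)·6^j·3^k of a theta hyperplane of type (i,j,k), satisfies ∑_{i=0}^{τ} ∑_{j=0}^{i} ∑_{k=0}^{γ} 4^(i−j) · 6^j · 3^k · t(i,j,k) = N_g. -/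

import Mathlib

/-!
Write `a = 2 ^ (g̃ - 1)`, so that `N_g̃ = a (2a - 1)` and `N⁺_g̃ = a (2a + 1)`. For `j = i` both cases
are `2a² - a (-1) ^ (τ - i + γ - k)`, and `2a² = 2 ^ (2g̃ - 1)` is exactly the value at `j = i` of the
formula for `j < i`. So `t(i,j,k)` is a binomial-type term minus a correction supported on `j = i`,
and the binomial theorem turns the weighted sum into
`2 ^ (2g̃ - 1) (6 + 8 + 2) ^ τ (3 + 1) ^ γ - 2 ^ (g̃ - 1) (6 - 2) ^ τ (3 - 1) ^ γ = 2 ^ (2g - 1) - 2 ^ (g - 1)`,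
which is `N_g`.
-/

open Finset

/-- `N m = 2^(m-1) * (2^m - 1)`, the number of odd theta characteristics
of a smooth curve of genus `m`. -/
def thetaOdd (m : ℕ) : ℕ := 2 ^ (m - 1) * (2 ^ m - 1)

/-- `N⁺ m = 2^(m-1) * (2^m + 1)`, the number of even theta characteristics
of a smooth curve of genus `m`. -/
def thetaEven (m : ℕ) : ℕ := 2 ^ (m - 1) * (2 ^ m + 1)

theorem add_add_pow {R : Type*} [CommSemiring R] (x y z : R) (n : ℕ) :
    (x + y + z) ^ n = ∑ i ∈ range (n + 1), ∑ j ∈ range (i + 1),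
      x ^ j * y ^ (i - j) * z ^ (n - i) * (n.choose i * i.choose j : ℕ) := by
  rw [add_pow]
  refine sum_congr rfl fun i _ => ?_
  rw [add_pow, sum_mul, sum_mul]
  refine sum_congr rfl fun j _ => ?_
  push_cast
  ring

theorem cast_thetaOdd (m : ℕ) : (thetaOdd m : ℤ) = 2 ^ (2 * m - 1) - 2 ^ (m - 1) := by
  rw [thetaOdd, Nat.cast_mul, Nat.cast_sub Nat.one_le_two_pow, show 2 * m - 1 = m - 1 + m by omega]
  push_cast
  ring

theorem cast_thetaEven (m : ℕ) : (thetaEven m : ℤ) = 2 ^ (2 * m - 1) + 2 ^ (m - 1) := by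
  rw [thetaEven, show 2 * m - 1 = m - 1 + m by omega]
  push_cast
  ring

def thetaHyperplaneCount (n τ γ i j k : ℕ) : ℕ :=
  if j < i then
    2 ^ (2 * n + τ - j - 1) * Nat.choose τ i * Nat.choose i j * Nat.choose γ k
  else if (τ - i + γ - k) % 2 = 0 then
    2 ^ (τ - i) * Nat.choose τ i * Nat.choose γ k * thetaOdd n
  else
    2 ^ (τ - i) * Nat.choose τ i * Nat.choose γ k * thetaEven n

theorem cast_thetaHyperplaneCount {n τ γ i j k : ℕ} (hn : 1 ≤ n) (hji : j ≤ i) (hiτ : i ≤ τ) :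
    (thetaHyperplaneCount n τ γ i j k : ℤ) =
      2 ^ (2 * n - 1) * 2 ^ (τ - j) * (τ.choose i * i.choose j * γ.choose k : ℕ) -
        if j = i then
          2 ^ (n - 1) * 2 ^ (τ - i) * (-1 : ℤ) ^ (τ - i + γ - k) * (τ.choose i * γ.choose k : ℕ)
        else 0 := by
  unfold thetaHyperplaneCount
  rcases hji.lt_or_eq with hlt | rfl
  · rw [if_pos hlt, if_neg hlt.ne, show 2 * n + τ - j - 1 = 2 * n - 1 + (τ - j) by omega]
    push_cast
    ring
  · simp only [lt_irrefl, if_false, if_true, Nat.choose_self]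
    rcases Nat.even_or_odd (τ - j + γ - k) with he | ho
    · rw [if_pos (Nat.even_iff.mp he), he.neg_one_pow]
      push_cast [cast_thetaOdd]
      ring
    · rw [if_neg (by rw [Nat.odd_iff.mp ho]; decide), ho.neg_one_pow]
      push_cast [cast_thetaEven]
      ring

theorem cast_weighted_thetaHyperplaneCount {n τ γ i j k : ℕ} (hn : 1 ≤ n) (hji : j ≤ i)
    (hiτ : i ≤ τ) (hkγ : k ≤ γ) :
    ((4 ^ (i - j) * 6 ^ j * 3 ^ k * thetaHyperplaneCount n τ γ i j k : ℕ) : ℤ) =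
      2 ^ (2 * n - 1) * (6 ^ j * 8 ^ (i - j) * 2 ^ (τ - i) * (τ.choose i * i.choose j : ℕ)) *
          (3 ^ k * 1 ^ (γ - k) * γ.choose k) -
        if j = i then
          2 ^ (n - 1) * (6 ^ i * (-2 : ℤ) ^ (τ - i) * τ.choose i) *
            (3 ^ k * (-1) ^ (γ - k) * γ.choose k)
        else 0 := by
  rw [Nat.cast_mul, cast_thetaHyperplaneCount hn hji hiτ]
  split_ifs with h
  · subst h
    rw [show τ - j + γ - k = (τ - j) + (γ - k) by omega, pow_add,
      show (-2 : ℤ) = -1 * 2 by norm_num, mul_pow]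
    simp only [Nat.sub_self, pow_zero, Nat.choose_self]
    push_cast
    ring
  · rw [show τ - j = (τ - i) + (i - j) by omega, pow_add, show (8 : ℤ) = 4 * 2 by norm_num, mul_pow]
    push_cast
    ring

theorem cast_sum_weighted_thetaHyperplaneCount {n : ℕ} (hn : 1 ≤ n) (τ γ : ℕ) :
    ((∑ i ∈ range (τ + 1), ∑ j ∈ range (i + 1), ∑ k ∈ range (γ + 1),
        4 ^ (i - j) * 6 ^ j * 3 ^ k * thetaHyperplaneCount n τ γ i j k : ℕ) : ℤ) =
      2 ^ (2 * n - 1) * 16 ^ τ * 4 ^ γ - 2 ^ (n - 1) * 4 ^ τ * 2 ^ γ := by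
  have hsummand : ∀ i ∈ range (τ + 1), ∀ j ∈ range (i + 1), ∀ k ∈ range (γ + 1), _ :=
    fun i hi j hj k hk => cast_weighted_thetaHyperplaneCount hn (mem_range_succ_iff.mp hj)
      (mem_range_succ_iff.mp hi) (mem_range_succ_iff.mp hk)
  push_cast only [Nat.cast_sum]
  rw [sum_congr rfl fun i hi => sum_congr rfl fun j hj => sum_congr rfl (hsummand i hi j hj)]
  simp only [sum_sub_distrib, ← mul_sum, ← sum_mul, sum_ite_irrel, sum_const_zero, sum_ite_eq',
    mem_range, lt_add_one, if_true]
  rw [← add_add_pow, ← add_pow, ← add_pow, ← add_pow]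
  norm_num

theorem cast_thetaOdd_add {n : ℕ} (hn : 1 ≤ n) (τ γ : ℕ) :
    (thetaOdd (n + γ + 2 * τ) : ℤ) =
      2 ^ (2 * n - 1) * 16 ^ τ * 4 ^ γ - 2 ^ (n - 1) * 4 ^ τ * 2 ^ γ := by
  rw [cast_thetaOdd, show 2 * (n + γ + 2 * τ) - 1 = 2 * n - 1 + 4 * τ + 2 * γ by omega,
    show n + γ + 2 * τ - 1 = n - 1 + 2 * τ + γ by omega]
  simp only [pow_add, pow_mul]
  norm_num

theorem weighted_theta_hyperplane_count
    (g τ γ g' : ℕ)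
    (hle : γ + 2 * τ ≤ g)
    (hg' : g' = g - γ - 2 * τ)
    (hg1 : 1 ≤ g')
    (t : ℕ → ℕ → ℕ → ℕ)
    (ht : ∀ i j k, j ≤ i → i ≤ τ → k ≤ γ →
      t i j k =
        if j < i then
          2 ^ (2 * g' + τ - j - 1) * Nat.choose τ i * Nat.choose i j * Nat.choose γ k
        else if (τ - i + γ - k) % 2 = 0 then
          2 ^ (τ - i) * Nat.choose τ i * Nat.choose γ k * thetaOdd g'
        else
          2 ^ (τ - i) * Nat.choose τ i * Nat.choose γ k * thetaEven g') :
    (∑ i ∈ Finset.range (τ + 1), ∑ j ∈ Finset.range (i + 1),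
        ∑ k ∈ Finset.range (γ + 1), 4 ^ (i - j) * 6 ^ j * 3 ^ k * t i j k)
      = thetaOdd g := by
  obtain rfl : g = g' + γ + 2 * τ := by omega
  have ht' : ∀ i ∈ range (τ + 1), ∀ j ∈ range (i + 1), ∀ k ∈ range (γ + 1),
      4 ^ (i - j) * 6 ^ j * 3 ^ k * t i j k =
        4 ^ (i - j) * 6 ^ j * 3 ^ k * thetaHyperplaneCount g' τ γ i j k :=
    fun i hi j hj k hk => by
      rw [ht i j k (mem_range_succ_iff.mp hj) (mem_range_succ_iff.mp hi)
        (mem_range_succ_iff.mp hk), thetaHyperplaneCount]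
  rw [sum_congr rfl fun i hi => sum_congr rfl fun j hj => sum_congr rfl (ht' i hi j hj)]
  apply Nat.cast_injective (R := ℤ)
  rw [cast_sum_weighted_thetaHyperplaneCount hg1, cast_thetaOdd_add hg1]
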